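/- arXiv:1411.1698 — 2 statements merged into one kernel-verified Lean document; each statement's English description precedes it below -/
import Mathlib

section
/- For every x ∈ [0.37613, 0.58870], the equation w₂(x,θ) = 0 has a unique solution θ ∈ ℝ. Furthermore, the system of equations w₁(x,θ) = 0 and w₂(x,θ) = 0 has a unique solution (x,θ) with x ∈ [0.37613, 0.58870]. -/
/-- The Gaussian error function `erf x = (2/√π) ∫₀ˣ exp(−t²) dt`. -/
noncomputable def erf (x : ℝ) : ℝ :=
  (2 / Real.sqrt Real.pi) * ∫ t in (0:ℝ)..x, Real.exp (-t ^ 2)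

/-- `w₁(x,θ) = −2x² + θ² + log(1 + erf(2x+θ))`. -/
noncomputable def w₁ (x θ : ℝ) : ℝ :=
  -2 * x ^ 2 + θ ^ 2 + Real.log (1 + erf (2 * x + θ))

/-- `w₂(x,θ) = θ + (1/√π)·exp(−(2x+θ)²)/(1 + erf(2x+θ))`. -/
noncomputable def w₂ (x θ : ℝ) : ℝ :=
  θ + (1 / Real.sqrt Real.pi) * (Real.exp (-(2 * x + θ) ^ 2) / (1 + erf (2 * x + θ)))

/-!
Write `G = invMills`, `G u = exp (-u²) / (√π (1 + erf u))`, so that `w₂ x θ = θ + G (2x + θ)`.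
Since `√π (1 + erf u) = 2 ∫_{-∞}^u exp (-t²) dt`, `-G u` is the mean of the weight `exp (-t²)` on
`(-∞, u]`, and `G' = -2 G (u + G)`; that the variance of this weight is positive says exactly
`1 + G' > 0`. So `u ↦ u + G u` is strictly increasing, hence so is `θ ↦ w₂ x θ`, and the
intermediate value theorem provides its zero.

The zero set of `w₂` is the curve `u ↦ ((u + G u) / 2, -G u)`, along which `w₁` becomes
`Ψ u = -(u + G u)² / 2 + (G u)² + log (1 + erf u)`, with `Ψ' = (1 + G') (G - u)`. Since `G` is
decreasing on `[0, ∞)` and `G 0.37 ≤ 0.37`, `Ψ` is strictly decreasing on `[0.37, ∞)`. Taylor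
bounds for `erf` show that `Ψ` changes sign on `[0.5, 1.05]`, and this parameter range is mapped
into `[0.37613, 0.58870]`.
-/

open Real MeasureTheory Set Filter Topology

lemma sqrt_pi_pos : 0 < √π := sqrt_pos.2 pi_pos

lemma integrable_exp_neg_sq : Integrable fun t : ℝ => exp (-t ^ 2) := by
  simpa using integrable_exp_neg_mul_sq one_pos

lemma integrable_mul_exp_neg_sq : Integrable fun t : ℝ => t * exp (-t ^ 2) := by
  simpa using integrable_mul_exp_neg_mul_sq one_pos

lemma integrable_sq_mul_exp_neg_sq : Integrable fun t : ℝ => t ^ 2 * exp (-t ^ 2) := by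
  simpa using integrable_rpow_mul_exp_neg_mul_sq one_pos (s := 2) (by norm_num)

lemma hasDerivAt_exp_neg_sq (t : ℝ) :
    HasDerivAt (fun t => exp (-t ^ 2)) (-2 * t * exp (-t ^ 2)) t := by
  convert (hasDerivAt_pow 2 t).fun_neg.exp using 1; ring

lemma setIntegral_Iic_pos_of_pos_on_Iio {f : ℝ → ℝ} {u a : ℝ} (hf : Continuous f)
    (hint : IntegrableOn f (Iic u)) (hnonneg : ∀ t ≤ u, 0 ≤ f t) (hpos : ∀ t < a, 0 < f t) :
    0 < ∫ t in Iic u, f t := by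
  set b := min u a
  have hsub : 0 < ∫ t in (b - 1)..b, f t :=
    intervalIntegral.intervalIntegral_pos_of_pos_on (hf.intervalIntegrable _ _)
      (fun t ht => hpos t (ht.2.trans_le (min_le_right _ _))) (by linarith)
  refine hsub.trans_le ?_
  rw [intervalIntegral.integral_of_le (by linarith)]
  exact setIntegral_mono_set hint (ae_restrict_of_forall_mem measurableSet_Iic hnonneg)
    (Eventually.of_forall fun t ht => ht.2.trans (min_le_left _ _))

lemma integral_Iic_exp_neg_sq_pos (u : ℝ) : 0 < ∫ t in Iic u, exp (-t ^ 2) :=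
  setIntegral_Iic_pos_of_pos_on_Iio (a := u) (by fun_prop) integrable_exp_neg_sq.integrableOn
    (fun _ _ => (exp_pos _).le) (fun _ _ => exp_pos _)

lemma integral_Iic_zero_exp_neg_sq : ∫ t in Iic (0 : ℝ), exp (-t ^ 2) = √π / 2 := by
  have h := integral_gaussian_Ioi 1
  rw [← neg_zero, ← integral_comp_neg_Iic] at h
  simpa using h

lemma one_add_erf_eq (u : ℝ) : 1 + erf u = 2 / √π * ∫ t in Iic u, exp (-t ^ 2) := by
  have hsplit := intervalIntegral.integral_Iic_sub_Iic (a := 0) (b := u)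
    integrable_exp_neg_sq.integrableOn integrable_exp_neg_sq.integrableOn
  rw [integral_Iic_zero_exp_neg_sq] at hsplit
  have := sqrt_pi_pos.ne'
  rw [erf, ← hsplit]
  field_simp
  ring

lemma one_add_erf_pos (u : ℝ) : 0 < 1 + erf u := by
  rw [one_add_erf_eq]
  exact mul_pos (div_pos two_pos sqrt_pi_pos) (integral_Iic_exp_neg_sq_pos u)

lemma integral_Iic_mul_exp_neg_sq (u : ℝ) :
    ∫ t in Iic u, t * exp (-t ^ 2) = -exp (-u ^ 2) / 2 := by
  have hderiv (t : ℝ) : HasDerivAt (fun t => -exp (-t ^ 2) / 2) (t * exp (-t ^ 2)) t :=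
    ((hasDerivAt_exp_neg_sq t).fun_neg.div_const 2).congr_deriv (by ring)
  have hlim : Tendsto (fun t : ℝ => -exp (-t ^ 2) / 2) atBot (𝓝 0) :=
    tendsto_zero_of_hasDerivAt_of_integrableOn_Iic (a := 0) (fun t _ => hderiv t)
      integrable_mul_exp_neg_sq.integrableOn (integrable_exp_neg_sq.neg.div_const 2).integrableOn
  rw [integral_Iic_of_hasDerivAt_of_tendsto' (fun t _ => hderiv t)
    integrable_mul_exp_neg_sq.integrableOn hlim, sub_zero]

lemma integral_Iic_sq_mul_exp_neg_sq (u : ℝ) : ∫ t in Iic u, t ^ 2 * exp (-t ^ 2) =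
    ((∫ t in Iic u, exp (-t ^ 2)) - u * exp (-u ^ 2)) / 2 := by
  have hderiv (t : ℝ) : HasDerivAt (fun t => -(t * exp (-t ^ 2)) / 2)
      (t ^ 2 * exp (-t ^ 2) - exp (-t ^ 2) / 2) t :=
    ((hasDerivAt_id' t).fun_mul (hasDerivAt_exp_neg_sq t)).fun_neg.div_const 2
      |>.congr_deriv (by ring)
  have hint : Integrable fun t : ℝ => t ^ 2 * exp (-t ^ 2) - exp (-t ^ 2) / 2 :=
    integrable_sq_mul_exp_neg_sq.sub (integrable_exp_neg_sq.div_const 2)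
  have hlim : Tendsto (fun t : ℝ => -(t * exp (-t ^ 2)) / 2) atBot (𝓝 0) :=
    tendsto_zero_of_hasDerivAt_of_integrableOn_Iic (a := 0) (fun t _ => hderiv t)
      hint.integrableOn (integrable_mul_exp_neg_sq.neg.div_const 2).integrableOn
  have h := integral_Iic_of_hasDerivAt_of_tendsto' (a := u) (fun t _ => hderiv t)
    hint.integrableOn hlim
  rw [integral_sub integrable_sq_mul_exp_neg_sq.integrableOn
    (integrable_exp_neg_sq.div_const 2).integrableOn, integral_div] at h
  linarith

lemma hasDerivAt_erf (u : ℝ) : HasDerivAt erf (2 / √π * exp (-u ^ 2)) u := by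
  have hcont : Continuous fun t : ℝ => exp (-t ^ 2) := by fun_prop
  exact (intervalIntegral.integral_hasDerivAt_right (hcont.intervalIntegrable _ _)
    (hcont.stronglyMeasurableAtFilter _ _) hcont.continuousAt).const_mul _

noncomputable def invMills (u : ℝ) : ℝ := exp (-u ^ 2) / (√π * (1 + erf u))

lemma w₂_eq (x θ : ℝ) : w₂ x θ = θ + invMills (2 * x + θ) := by
  rw [w₂, invMills, one_div_mul_eq_div, div_div, mul_comm (1 + _)]

lemma invMills_eq (u : ℝ) :
    invMills u = exp (-u ^ 2) / (2 * ∫ t in Iic u, exp (-t ^ 2)) := by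
  have := sqrt_pi_pos.ne'
  rw [invMills, one_add_erf_eq]
  field_simp

lemma invMills_pos (u : ℝ) : 0 < invMills u :=
  div_pos (exp_pos _) (mul_pos sqrt_pi_pos (one_add_erf_pos u))

lemma invMills_zero : invMills 0 = 1 / √π := by
  simp [invMills, erf]

lemma hasDerivAt_invMills (u : ℝ) :
    HasDerivAt invMills (-2 * invMills u * (u + invMills u)) u := by
  have := sqrt_pi_pos.ne'
  have := (one_add_erf_pos u).ne'
  refine ((hasDerivAt_exp_neg_sq u).div (((hasDerivAt_erf u).const_add 1).const_mul √π)
    (by positivity)).congr_deriv ?_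
  unfold invMills
  field_simp
  ring

lemma one_sub_two_mul_invMills_mul_pos (u : ℝ) :
    0 < 1 - 2 * invMills u * (u + invMills u) := by
  have hE : exp (-u ^ 2) = 2 * invMills u * ∫ t in Iic u, exp (-t ^ 2) := by
    rw [invMills_eq]; field_simp [(integral_Iic_exp_neg_sq_pos u).ne']
  set G := invMills u
  set I := ∫ t in Iic u, exp (-t ^ 2)
  have hexpand : (fun t : ℝ => (t + G) ^ 2 * exp (-t ^ 2)) = fun t =>
      (t ^ 2 * exp (-t ^ 2) + 2 * G * (t * exp (-t ^ 2))) + G ^ 2 * exp (-t ^ 2) := by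
    ext t; ring
  have h₁ := integrable_sq_mul_exp_neg_sq
  have h₂ := integrable_mul_exp_neg_sq.const_mul (2 * G)
  have h₃ := integrable_exp_neg_sq.const_mul (G ^ 2)
  have h₁₂ : Integrable fun t : ℝ => t ^ 2 * exp (-t ^ 2) + 2 * G * (t * exp (-t ^ 2)) :=
    h₁.add h₂
  have hvar : ∫ t in Iic u, (t + G) ^ 2 * exp (-t ^ 2) = I / 2 * (1 - 2 * G * (u + G)) := by
    rw [hexpand, integral_add h₁₂.integrableOn h₃.integrableOn,
      integral_add h₁.integrableOn h₂.integrableOn, integral_const_mul, integral_const_mul,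
      integral_Iic_sq_mul_exp_neg_sq, integral_Iic_mul_exp_neg_sq, hE]
    ring
  have hpos : 0 < ∫ t in Iic u, (t + G) ^ 2 * exp (-t ^ 2) :=
    setIntegral_Iic_pos_of_pos_on_Iio (a := -G) (by fun_prop)
      (by rw [hexpand]; exact (h₁₂.add h₃).integrableOn)
      (fun t _ => by positivity) (fun t ht => mul_pos (by nlinarith) (exp_pos _))
  rw [hvar] at hpos
  exact pos_of_mul_pos_right hpos (by positivity)

lemma strictMono_add_invMills : StrictMono fun u => u + invMills u := by
  refine strictMono_of_hasDerivAt_pos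
    (fun u => (hasDerivAt_id u).add (hasDerivAt_invMills u)) fun u => ?_
  linarith [one_sub_two_mul_invMills_mul_pos u]

lemma strictAntiOn_invMills : StrictAntiOn invMills (Ici 0) := by
  refine strictAntiOn_of_hasDerivWithinAt_neg (convex_Ici 0)
    (fun u _ => (hasDerivAt_invMills u).continuousAt.continuousWithinAt)
    (fun u _ => (hasDerivAt_invMills u).hasDerivWithinAt) fun u hu => ?_
  rw [interior_Ici, mem_Ioi] at hu
  have := invMills_pos u
  nlinarith

lemma existsUnique_w₂_eq_zero {x : ℝ} (hx : 1 / √π ≤ 2 * x) : ∃! θ, w₂ x θ = 0 := by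
  have hw₂ (θ : ℝ) : w₂ x θ = (2 * x + θ) + invMills (2 * x + θ) - 2 * x := by
    rw [w₂_eq]; ring
  have hcont : Continuous fun u => u + invMills u :=
    continuous_id.add (continuous_iff_continuousAt.2 fun u => (hasDerivAt_invMills u).continuousAt)
  have h2x : 0 ≤ 2 * x := (one_div_pos.2 sqrt_pi_pos).le.trans hx
  obtain ⟨u, -, hu⟩ := intermediate_value_Icc h2x hcont.continuousOn
    ⟨by simpa [invMills_zero] using hx, by linarith [invMills_pos (2 * x)]⟩
  refine ⟨u - 2 * x, ?_, fun θ (hθ : w₂ x θ = 0) => ?_⟩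
  · simp only [hw₂, add_sub_cancel, hu, sub_self]
  · rw [hw₂, sub_eq_zero, ← hu] at hθ
    linarith [strictMono_add_invMills.injective hθ]

noncomputable def zeroCurveX (u : ℝ) : ℝ := (u + invMills u) / 2

noncomputable def w₁OnZeroCurve (u : ℝ) : ℝ :=
  -2 * zeroCurveX u ^ 2 + invMills u ^ 2 + log (1 + erf u)

lemma strictMono_zeroCurveX : StrictMono zeroCurveX :=
  fun _ _ h => div_lt_div_of_pos_right (strictMono_add_invMills h) two_pos

lemma w₂_zeroCurve (u : ℝ) : w₂ (zeroCurveX u) (-invMills u) = 0 := by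
  rw [w₂_eq, zeroCurveX]; ring_nf

lemma w₁_zeroCurve (u : ℝ) : w₁ (zeroCurveX u) (-invMills u) = w₁OnZeroCurve u := by
  rw [w₁, w₁OnZeroCurve, zeroCurveX]; ring_nf

lemma eq_zeroCurve_of_w₂_eq_zero {x θ : ℝ} (h : w₂ x θ = 0) :
    x = zeroCurveX (2 * x + θ) ∧ θ = -invMills (2 * x + θ) := by
  rw [w₂_eq] at h
  constructor
  · rw [zeroCurveX]; linarith
  · linarith

lemma hasDerivAt_w₁OnZeroCurve (u : ℝ) : HasDerivAt w₁OnZeroCurve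
    ((1 - 2 * invMills u * (u + invMills u)) * (invMills u - u)) u := by
  have hG := hasDerivAt_invMills u
  have hX : HasDerivAt zeroCurveX ((1 + -2 * invMills u * (u + invMills u)) / 2) u :=
    ((hasDerivAt_id u).add hG).div_const 2
  have hlog := ((hasDerivAt_erf u).const_add 1).log (one_add_erf_pos u).ne'
  have hlog' : 2 / √π * exp (-u ^ 2) / (1 + erf u) = 2 * invMills u := by
    rw [invMills]; field_simp
  rw [hlog'] at hlog
  refine (((hX.pow 2).const_mul (-2)).add (hG.pow 2) |>.add hlog).congr_deriv ?_
  rw [zeroCurveX]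
  ring

lemma strictAntiOn_w₁OnZeroCurve {c : ℝ} (hc : 0 ≤ c) (hGc : invMills c ≤ c) :
    StrictAntiOn w₁OnZeroCurve (Ici c) := by
  refine strictAntiOn_of_hasDerivWithinAt_neg (convex_Ici c)
    (fun u _ => (hasDerivAt_w₁OnZeroCurve u).continuousAt.continuousWithinAt)
    (fun u _ => (hasDerivAt_w₁OnZeroCurve u).hasDerivWithinAt) fun u hu => ?_
  rw [interior_Ici, mem_Ioi] at hu
  have hGu : invMills u < u := calc
    invMills u < invMills c := strictAntiOn_invMills hc (hc.trans hu.le) hu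
    _ ≤ c := hGc
    _ < u := hu
  exact mul_neg_of_pos_of_neg (one_sub_two_mul_invMills_mul_pos u) (sub_neg.2 hGu)

lemma existsUnique_common_zero {a b c u₁ u₂ : ℝ} (hc : 0 ≤ c) (hGc : invMills c ≤ c)
    (hca : c ≤ a) (hu : u₁ ≤ u₂) (hX₁ : a ≤ zeroCurveX u₁) (hX₂ : zeroCurveX u₂ ≤ b)
    (hΨ₁ : 0 ≤ w₁OnZeroCurve u₁) (hΨ₂ : w₁OnZeroCurve u₂ ≤ 0) :
    ∃! p : ℝ × ℝ, p.1 ∈ Icc a b ∧ w₁ p.1 p.2 = 0 ∧ w₂ p.1 p.2 = 0 := by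
  have hge {u : ℝ} (h : a ≤ zeroCurveX u) : u ∈ Ici c := by
    refine strictMono_zeroCurveX.le_iff_le.1 (le_trans ?_ (hca.trans h))
    rw [zeroCurveX]; linarith
  have hcont : ContinuousOn w₁OnZeroCurve (Icc u₁ u₂) := fun u _ =>
    (hasDerivAt_w₁OnZeroCurve u).continuousAt.continuousWithinAt
  obtain ⟨u₀, ⟨hu₁, hu₂⟩, hΨ₀⟩ := intermediate_value_Icc' hu hcont ⟨hΨ₂, hΨ₁⟩
  have hX₀ : a ≤ zeroCurveX u₀ := hX₁.trans (strictMono_zeroCurveX.monotone hu₁)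
  refine ⟨(zeroCurveX u₀, -invMills u₀),
    ⟨⟨hX₀, (strictMono_zeroCurveX.monotone hu₂).trans hX₂⟩,
      by rw [w₁_zeroCurve, hΨ₀], w₂_zeroCurve u₀⟩, ?_⟩
  rintro ⟨x, θ⟩ ⟨hx, hw₁, hw₂⟩
  obtain ⟨hxu, hθu⟩ := eq_zeroCurve_of_w₂_eq_zero hw₂
  set u := 2 * x + θ
  have hΨ : w₁OnZeroCurve u = w₁OnZeroCurve u₀ := by
    rw [hΨ₀, ← w₁_zeroCurve, ← hxu, ← hθu, hw₁]
  have := (strictAntiOn_w₁OnZeroCurve hc hGc).injOn (hge (hxu ▸ hx.1)) (hge hX₀) hΨ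
  rw [Prod.mk.injEq, ← this]
  exact ⟨hxu, hθu⟩

lemma abs_exp_sub_taylor_le {x : ℝ} (hx : |x| ≤ 1) :
    |exp x - (1 + x + x ^ 2 / 2 + x ^ 3 / 6 + x ^ 4 / 24)| ≤ |x| ^ 5 / 100 := by
  have h := Real.exp_bound hx (n := 5) (by norm_num)
  norm_num [Finset.sum_range_succ, Nat.factorial] at h
  convert h using 2
  ring

lemma integral_taylor_exp_neg_sq (c : ℝ) :
    ∫ t in (0 : ℝ)..c, (1 - t ^ 2 + t ^ 4 / 2 - t ^ 6 / 6 + t ^ 8 / 24) =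
      c - c ^ 3 / 3 + c ^ 5 / 10 - c ^ 7 / 42 + c ^ 9 / 216 := by
  have hderiv (t : ℝ) :
      HasDerivAt (fun t => t - t ^ 3 / 3 + t ^ 5 / 10 - t ^ 7 / 42 + t ^ 9 / 216)
        (1 - t ^ 2 + t ^ 4 / 2 - t ^ 6 / 6 + t ^ 8 / 24) t :=
    ((((hasDerivAt_id' t).fun_sub ((hasDerivAt_pow 3 t).div_const 3)).fun_add
      ((hasDerivAt_pow 5 t).div_const 10)).fun_sub ((hasDerivAt_pow 7 t).div_const 42)).fun_add
      ((hasDerivAt_pow 9 t).div_const 216) |>.congr_deriv (by norm_num; ring)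
  rw [intervalIntegral.integral_eq_sub_of_hasDerivAt (fun t _ => hderiv t)
    (Continuous.intervalIntegrable (by fun_prop) _ _)]
  ring

lemma abs_integral_exp_neg_sq_sub_le {c : ℝ} (h₀ : 0 ≤ c) (h₁ : c ≤ 1) :
    |(∫ t in (0 : ℝ)..c, exp (-t ^ 2)) - (c - c ^ 3 / 3 + c ^ 5 / 10 - c ^ 7 / 42 + c ^ 9 / 216)|
      ≤ c ^ 11 / 1100 := by
  have herr : ∫ t in (0 : ℝ)..c, t ^ 10 / 100 = c ^ 11 / 1100 := by
    simp [integral_pow]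
    ring
  rw [← integral_taylor_exp_neg_sq, ← herr, ← intervalIntegral.integral_sub
    (Continuous.intervalIntegrable (by fun_prop) _ _)
    (Continuous.intervalIntegrable (by fun_prop) _ _), ← Real.norm_eq_abs]
  refine intervalIntegral.norm_integral_le_of_norm_le h₀
    (Eventually.of_forall fun t ht => ?_) ?_
  · have hsq : |-t ^ 2| ≤ 1 := by
      rw [abs_neg, abs_of_nonneg (sq_nonneg t)]
      nlinarith [ht.1, ht.2]
    have := abs_exp_sub_taylor_le hsq
    rw [abs_neg, abs_of_nonneg (sq_nonneg t)] at this
    rw [Real.norm_eq_abs]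
    convert this using 2 <;> ring
  · exact (intervalIntegral.intervalIntegrable_pow 10).div_const _

lemma sqrt_pi_gt_d4 : 1.7724 < √π := by
  rw [Real.lt_sqrt (by norm_num)]; linarith [pi_gt_d6]

lemma sqrt_pi_lt_d4 : √π < 1.7725 := by
  rw [Real.sqrt_lt' (by norm_num)]; linarith [pi_lt_d6]

lemma sqrt_pi_mul_one_add_erf (c : ℝ) :
    √π * (1 + erf c) = √π + 2 * ∫ t in (0 : ℝ)..c, exp (-t ^ 2) := by
  have := sqrt_pi_pos.ne'
  rw [erf]; field_simp

lemma invMills_eq_div (c : ℝ) :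
    invMills c = exp (-c ^ 2) / (√π + 2 * ∫ t in (0 : ℝ)..c, exp (-t ^ 2)) := by
  rw [invMills, sqrt_pi_mul_one_add_erf]

lemma integral_exp_neg_sq_037 : 0.3537 ≤ ∫ t in (0 : ℝ)..0.37, exp (-t ^ 2) := by
  have h := abs_le.1 (abs_integral_exp_neg_sq_sub_le (c := 0.37) (by norm_num) (by norm_num))
  norm_num at h
  linarith

lemma integral_exp_neg_sq_05 :
    ∫ t in (0 : ℝ)..0.5, exp (-t ^ 2) ∈ Icc 0.4612 0.4613 := by
  have h := abs_le.1 (abs_integral_exp_neg_sq_sub_le (c := 0.5) (by norm_num) (by norm_num))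
  norm_num at h
  constructor <;> linarith

lemma integral_exp_neg_sq_105 :
    ∫ t in (0 : ℝ)..1.05, exp (-t ^ 2) ∈ Icc 0.7465 0.7668 := by
  have hcont : Continuous fun t : ℝ => exp (-t ^ 2) := by fun_prop
  have h := abs_le.1 (abs_integral_exp_neg_sq_sub_le (c := 1) (by norm_num) (by norm_num))
  norm_num at h
  -- the Taylor bound needs `t ^ 2 ≤ 1`; beyond `t = 1` the integrand is at most `exp (-1)`
  have htail : ∫ t in (1 : ℝ)..1.05, exp (-t ^ 2) ∈ Icc 0 (0.05 * exp (-1)) := by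
    refine ⟨intervalIntegral.integral_nonneg (by norm_num) fun t _ => (exp_pos _).le, ?_⟩
    calc ∫ t in (1 : ℝ)..1.05, exp (-t ^ 2) ≤ ∫ t in (1 : ℝ)..1.05, exp (-1) :=
          intervalIntegral.integral_mono_on (by norm_num) (hcont.intervalIntegrable _ _)
            intervalIntegrable_const fun t ht => exp_le_exp.2 (by nlinarith [ht.1])
      _ = 0.05 * exp (-1) := by rw [intervalIntegral.integral_const]; norm_num
  rw [← intervalIntegral.integral_add_adjacent_intervals (b := 1) (hcont.intervalIntegrable _ _)
    (hcont.intervalIntegrable _ _)]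
  have := exp_neg_one_lt_d9
  constructor <;> linarith [htail.1, htail.2]

lemma invMills_037_le : invMills 0.37 ≤ 0.37 := by
  have hE := abs_le.1 (abs_exp_sub_taylor_le (x := -0.37 ^ 2) (by norm_num [abs_le]))
  rw [invMills_eq_div, div_le_iff₀ (by linarith [sqrt_pi_gt_d4, integral_exp_neg_sq_037])]
  norm_num at hE ⊢
  linarith [sqrt_pi_gt_d4, integral_exp_neg_sq_037]

lemma invMills_05_mem : invMills 0.5 ∈ Icc 0.28 0.29 := by
  have hE := abs_le.1 (abs_exp_sub_taylor_le (x := -0.5 ^ 2) (by norm_num [abs_le]))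
  obtain ⟨hD₁, hD₂⟩ := integral_exp_neg_sq_05
  have hpos : 0 < √π + 2 * ∫ t in (0 : ℝ)..0.5, exp (-t ^ 2) := by linarith [sqrt_pi_gt_d4]
  rw [mem_Icc, invMills_eq_div, le_div_iff₀ hpos, div_le_iff₀ hpos]
  norm_num at hE ⊢
  constructor <;> linarith [sqrt_pi_gt_d4, sqrt_pi_lt_d4]

lemma invMills_105_mem : invMills 1.05 ∈ Icc 0.099 0.113 := by
  have hsplit : exp (-1.05 ^ 2) = exp (-1) * exp (-0.1025) := by rw [← exp_add]; norm_num
  have hE₁ : exp (-1) * (1 - 0.1025) ≤ exp (-1.05 ^ 2) := by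
    rw [hsplit]
    exact mul_le_mul_of_nonneg_left (by linarith [add_one_le_exp (-0.1025)]) (exp_pos _).le
  have hE₂ : exp (-1.05 ^ 2) ≤ exp (-1) := exp_le_exp.2 (by norm_num)
  obtain ⟨hD₁, hD₂⟩ := integral_exp_neg_sq_105
  have hpos : 0 < √π + 2 * ∫ t in (0 : ℝ)..1.05, exp (-t ^ 2) := by linarith [sqrt_pi_gt_d4]
  rw [mem_Icc, invMills_eq_div, le_div_iff₀ hpos, div_le_iff₀ hpos]
  have := exp_neg_one_gt_d9
  have := exp_neg_one_lt_d9
  constructor <;> linarith [sqrt_pi_gt_d4, sqrt_pi_lt_d4]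

lemma log_one_add_erf_05_ge : 0.34 ≤ log (1 + erf 0.5) := by
  refine le_trans ?_ (one_sub_inv_le_log_of_pos (one_add_erf_pos _))
  have hS : 1.52 ≤ 1 + erf 0.5 := by
    rw [← mul_le_mul_iff_of_pos_left sqrt_pi_pos, sqrt_pi_mul_one_add_erf]
    nlinarith [sqrt_pi_gt_d4, sqrt_pi_lt_d4, integral_exp_neg_sq_05.1]
  have := inv_anti₀ (by norm_num) hS
  norm_num at this ⊢
  linarith

lemma log_one_add_erf_105_le : log (1 + erf 1.05) ≤ 0.63 := by
  rw [log_le_iff_le_exp (one_add_erf_pos _)]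
  have hexp := abs_le.1 (abs_exp_sub_taylor_le (x := 0.63) (by norm_num [abs_le]))
  have hS : 1 + erf 1.05 ≤ 1.866 := by
    rw [← mul_le_mul_iff_of_pos_left sqrt_pi_pos, sqrt_pi_mul_one_add_erf]
    nlinarith [sqrt_pi_gt_d4, sqrt_pi_lt_d4, integral_exp_neg_sq_105.2]
  norm_num [abs_of_pos] at hexp
  linarith

theorem stmt2 :
    (∀ x ∈ Set.Icc (0.37613 : ℝ) 0.58870, ∃! θ : ℝ, w₂ x θ = 0) ∧
    (∃! p : ℝ × ℝ, p.1 ∈ Set.Icc (0.37613 : ℝ) 0.58870 ∧ w₁ p.1 p.2 = 0 ∧ w₂ p.1 p.2 = 0) := by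
  refine ⟨fun x hx => existsUnique_w₂_eq_zero ?_,
    existsUnique_common_zero (c := 0.37) (u₁ := 0.5) (u₂ := 1.05) (by norm_num) invMills_037_le
      (by norm_num) (by norm_num) ?_ ?_ ?_ ?_⟩
  · rw [div_le_iff₀ sqrt_pi_pos]
    nlinarith [sqrt_pi_gt_d4, hx.1]
  · rw [zeroCurveX]; linarith [invMills_05_mem.1]
  · rw [zeroCurveX]; linarith [invMills_105_mem.2]
  · obtain ⟨hG₁, hG₂⟩ := invMills_05_mem
    rw [w₁OnZeroCurve, zeroCurveX]
    nlinarith [log_one_add_erf_05_ge]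
  · obtain ⟨hG₁, hG₂⟩ := invMills_105_mem
    rw [w₁OnZeroCurve, zeroCurveX]
    nlinarith [log_one_add_erf_105_le]
end

section
/- For every real x > 0, the equation θ + (1/√π)·exp(−(2x+θ)²)/(1 + erf(2x+θ)) = 0 has exactly one solution θ ∈ ℝ. -/
open MeasureTheory Filter Real Set Topology

noncomputable def gauss (t : ℝ) : ℝ := exp (-t ^ 2)

noncomputable def gaussIic (u : ℝ) : ℝ := ∫ t in Iic u, gauss t

lemma pos_of_hasDerivAt_of_tendsto_atBot {f f' : ℝ → ℝ} (hf : ∀ u, HasDerivAt f (f' u) u)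
    (hf' : ∀ u, 0 < f' u) (hlim : Tendsto f atBot (𝓝 0)) (u : ℝ) : 0 < f u := by
  have hmono : StrictMono f := strictMono_of_deriv_pos fun v => (hf v).deriv ▸ hf' v
  have : 0 ≤ f (u - 1) :=
    le_of_tendsto hlim (eventually_atBot.2 ⟨u - 1, fun v hv => hmono.monotone hv⟩)
  linarith [hmono (sub_one_lt u)]

lemma tendsto_setIntegral_Iic_atBot {f : ℝ → ℝ} (hf : Integrable f) :
    Tendsto (fun u => ∫ t in Iic u, f t) atBot (𝓝 0) := by
  have h := (intervalIntegral_tendsto_integral_Iic (a := fun u => u) 0 hf.integrableOn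
    tendsto_id).const_sub (∫ t in Iic (0 : ℝ), f t)
  rw [sub_self] at h
  refine h.congr fun u => ?_
  rw [← intervalIntegral.integral_Iic_sub_Iic hf.integrableOn hf.integrableOn]
  ring

lemma tendsto_pow_mul_atBot_of_tendsto_sq_mul {f : ℝ → ℝ}
    (hf : Tendsto (fun u => u ^ 2 * f u) atBot (𝓝 0)) {n : ℕ} (hn : n ≤ 2) :
    Tendsto (fun u => u ^ n * f u) atBot (𝓝 0) := by
  refine squeeze_zero_norm' ?_ (by simpa using hf.norm)
  filter_upwards [eventually_le_atBot (-1)] with u hu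
  have h1 : 1 ≤ |u| := by rw [abs_of_neg (by linarith)]; linarith
  simp only [norm_mul, norm_pow, Real.norm_eq_abs]
  rw [← sq_abs u]
  gcongr

lemma tendsto_sq_atBot : Tendsto (fun u : ℝ => u ^ 2) atBot atTop :=
  tendsto_id.atBot_mul_atBot₀ tendsto_id |>.congr fun u => (sq u).symm

lemma gauss_pos (t : ℝ) : 0 < gauss t := exp_pos _

lemma continuous_gauss : Continuous gauss := by
  unfold gauss; fun_prop

lemma integrable_gauss : Integrable gauss := by
  show Integrable fun t => exp (-t ^ 2)
  simpa [gauss] using integrable_exp_neg_mul_sq (b := 1) one_pos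

lemma integrable_sq_mul_gauss : Integrable fun t => t ^ 2 * gauss t := by
  have h := integrable_rpow_mul_exp_neg_mul_sq (b := 1) one_pos (s := 2) (by norm_num)
  simp only [neg_mul, one_mul] at h
  exact h.congr (.of_forall fun t => by simp [gauss])

lemma hasDerivAt_gauss (u : ℝ) : HasDerivAt gauss (-2 * u * gauss u) u := by
  have h : HasDerivAt (fun t : ℝ => -t ^ 2) (-(2 * u)) u := by
    simpa using (hasDerivAt_pow 2 u).fun_neg
  exact h.exp.congr_deriv (by rw [gauss]; ring)

lemma tendsto_sq_mul_gauss_atBot : Tendsto (fun u => u ^ 2 * gauss u) atBot (𝓝 0) := by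
  simpa [gauss, Function.comp_def] using
    (tendsto_pow_mul_exp_neg_atTop_nhds_zero 1).comp tendsto_sq_atBot

lemma gaussIic_nonneg (u : ℝ) : 0 ≤ gaussIic u :=
  setIntegral_nonneg measurableSet_Iic fun t _ => (gauss_pos t).le

lemma gaussIic_eq_add_intervalIntegral (u : ℝ) :
    gaussIic u = gaussIic 0 + ∫ t in (0 : ℝ)..u, gauss t := by
  rw [← intervalIntegral.integral_Iic_sub_Iic integrable_gauss.integrableOn
    integrable_gauss.integrableOn, gaussIic, gaussIic]
  ring

lemma gaussIic_zero : gaussIic 0 = √π / 2 := by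
  rw [gaussIic, ← neg_zero, ← integral_comp_neg_Ioi]
  simpa [gauss] using integral_gaussian_Ioi 1

lemma hasDerivAt_gaussIic (u : ℝ) : HasDerivAt gaussIic (gauss u) u := by
  have := (intervalIntegral.integral_hasDerivAt_right (a := 0) (b := u)
    integrable_gauss.intervalIntegrable (continuous_gauss.stronglyMeasurableAtFilter _ _)
    continuous_gauss.continuousAt).const_add (gaussIic 0)
  exact this.congr_of_eventuallyEq (.of_forall gaussIic_eq_add_intervalIntegral)

lemma one_add_erf (u : ℝ) : 1 + erf u = 2 / √π * gaussIic u := by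
  have : (0 : ℝ) < √π := sqrt_pos.2 pi_pos
  rw [erf, gaussIic_eq_add_intervalIntegral, gaussIic_zero]
  unfold gauss
  field_simp

lemma tendsto_sq_mul_gaussIic_atBot : Tendsto (fun u => u ^ 2 * gaussIic u) atBot (𝓝 0) := by
  refine squeeze_zero' (.of_forall fun u => mul_nonneg (sq_nonneg u) (gaussIic_nonneg u)) ?_
    (tendsto_setIntegral_Iic_atBot integrable_sq_mul_gauss)
  filter_upwards [eventually_le_atBot 0] with u hu
  rw [gaussIic, ← integral_const_mul]
  refine setIntegral_mono_on (integrable_gauss.integrableOn.const_mul _)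
    integrable_sq_mul_gauss.integrableOn measurableSet_Iic fun t (ht : t ≤ u) => ?_
  exact mul_le_mul_of_nonneg_right (by nlinarith) (gauss_pos t).le

lemma tendsto_gauss_atBot : Tendsto gauss atBot (𝓝 0) := by
  simpa using
    tendsto_pow_mul_atBot_of_tendsto_sq_mul tendsto_sq_mul_gauss_atBot (n := 0) (by norm_num)

lemma tendsto_mul_gauss_atBot : Tendsto (fun u => u * gauss u) atBot (𝓝 0) := by
  simpa using
    tendsto_pow_mul_atBot_of_tendsto_sq_mul tendsto_sq_mul_gauss_atBot (n := 1) (by norm_num)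

lemma tendsto_gaussIic_atBot : Tendsto gaussIic atBot (𝓝 0) := by
  simpa using
    tendsto_pow_mul_atBot_of_tendsto_sq_mul tendsto_sq_mul_gaussIic_atBot (n := 0) (by norm_num)

lemma tendsto_mul_gaussIic_atBot : Tendsto (fun u => u * gaussIic u) atBot (𝓝 0) := by
  simpa using
    tendsto_pow_mul_atBot_of_tendsto_sq_mul tendsto_sq_mul_gaussIic_atBot (n := 1) (by norm_num)

lemma gaussIic_pos (u : ℝ) : 0 < gaussIic u :=
  pos_of_hasDerivAt_of_tendsto_atBot hasDerivAt_gaussIic gauss_pos tendsto_gaussIic_atBot u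

lemma gauss_add_two_mul_mul_gaussIic_pos (u : ℝ) : 0 < gauss u + 2 * u * gaussIic u := by
  refine pos_of_hasDerivAt_of_tendsto_atBot (f := fun u => gauss u + 2 * u * gaussIic u)
    (f' := fun u => 2 * gaussIic u) (fun u => ?_)
    (fun u => by linarith [gaussIic_pos u]) ?_ u
  · exact ((hasDerivAt_gauss u).add (((hasDerivAt_id' u).const_mul 2).mul
      (hasDerivAt_gaussIic u))).congr_deriv (by ring)
  · have h := tendsto_gauss_atBot.add (tendsto_mul_gaussIic_atBot.const_mul 2)
    rw [mul_zero, add_zero] at h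
    exact h.congr fun u => by ring

lemma one_add_two_mul_sq_mul_gaussIic_add_mul_gauss_pos (u : ℝ) :
    0 < (1 + 2 * u ^ 2) * gaussIic u + u * gauss u := by
  refine pos_of_hasDerivAt_of_tendsto_atBot
    (f := fun u => (1 + 2 * u ^ 2) * gaussIic u + u * gauss u)
    (f' := fun u => 2 * (gauss u + 2 * u * gaussIic u)) (fun u => ?_)
    (fun u => by linarith [gauss_add_two_mul_mul_gaussIic_pos u]) ?_ u
  · exact (((((hasDerivAt_pow 2 u).const_mul 2).const_add 1).mul (hasDerivAt_gaussIic u)).add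
      ((hasDerivAt_id' u).mul (hasDerivAt_gauss u))).congr_deriv (by ring)
  · have h := (tendsto_gaussIic_atBot.add (tendsto_sq_mul_gaussIic_atBot.const_mul 2)).add
      tendsto_mul_gauss_atBot
    rw [mul_zero, add_zero, add_zero] at h
    exact h.congr fun u => by ring

lemma two_mul_gaussIic_sq_sub_pos (u : ℝ) :
    0 < 2 * gaussIic u ^ 2 - 2 * u * gauss u * gaussIic u - gauss u ^ 2 := by
  refine pos_of_hasDerivAt_of_tendsto_atBot
    (f := fun u => 2 * gaussIic u ^ 2 - 2 * u * gauss u * gaussIic u - gauss u ^ 2)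
    (f' := fun u => 2 * gauss u * ((1 + 2 * u ^ 2) * gaussIic u + u * gauss u)) (fun u => ?_)
    (fun u => mul_pos (mul_pos two_pos (gauss_pos u))
      (one_add_two_mul_sq_mul_gaussIic_add_mul_gauss_pos u)) ?_ u
  · have hsq := ((hasDerivAt_gaussIic u).fun_pow 2).const_mul 2
    have hprod := (((hasDerivAt_id' u).const_mul 2).fun_mul (hasDerivAt_gauss u)).fun_mul
      (hasDerivAt_gaussIic u)
    exact ((hsq.sub hprod).sub ((hasDerivAt_gauss u).fun_pow 2)).congr_deriv (by ring)
  · have h := (((tendsto_gaussIic_atBot.mul tendsto_gaussIic_atBot).const_mul 2).sub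
      ((tendsto_mul_gauss_atBot.const_mul 2).mul tendsto_gaussIic_atBot)).sub
      (tendsto_gauss_atBot.mul tendsto_gauss_atBot)
    simp only [mul_zero, sub_zero] at h
    exact h.congr fun u => by ring

lemma hasDerivAt_add_gauss_div_gaussIic (u : ℝ) :
    HasDerivAt (fun v => v + gauss v / (2 * gaussIic v))
      ((2 * gaussIic u ^ 2 - 2 * u * gauss u * gaussIic u - gauss u ^ 2) /
        (2 * gaussIic u ^ 2)) u := by
  have hG := (gaussIic_pos u).ne'
  refine ((hasDerivAt_id' u).add ((hasDerivAt_gauss u).div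
    ((hasDerivAt_gaussIic u).const_mul 2) (mul_ne_zero two_ne_zero hG))).congr_deriv ?_
  field_simp
  ring

lemma strictMono_add_gauss_div_gaussIic : StrictMono fun u => u + gauss u / (2 * gaussIic u) :=
  strictMono_of_deriv_pos fun u => (hasDerivAt_add_gauss_div_gaussIic u).deriv ▸
    div_pos (two_mul_gaussIic_sq_sub_pos u) (by have := gaussIic_pos u; positivity)

lemma continuous_add_gauss_div_gaussIic : Continuous fun u => u + gauss u / (2 * gaussIic u) :=
  continuous_iff_continuousAt.2 fun u => (hasDerivAt_add_gauss_div_gaussIic u).continuousAt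

lemma add_gauss_div_gaussIic_lt {u : ℝ} (hu : u < 0) :
    u + gauss u / (2 * gaussIic u) < -u⁻¹ := by
  have hG := gaussIic_pos u
  have hM := one_add_two_mul_sq_mul_gaussIic_add_mul_gauss_pos u
  have h : -u⁻¹ - u = (1 + u ^ 2) / -u := by field_simp; ring
  suffices gauss u / (2 * gaussIic u) < (1 + u ^ 2) / -u by linarith
  rw [div_lt_div_iff₀ (by positivity) (by linarith)]
  nlinarith

lemma existsUnique_add_gauss_div_gaussIic_eq {y : ℝ} (hy : 0 < y) :
    ∃! u, u + gauss u / (2 * gaussIic u) = y := by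
  have hlow : -y⁻¹ + gauss (-y⁻¹) / (2 * gaussIic (-y⁻¹)) < y := by
    simpa using add_gauss_div_gaussIic_lt (neg_lt_zero.2 (inv_pos.2 hy))
  have hhigh : y < y + gauss y / (2 * gaussIic y) :=
    lt_add_of_pos_right y (div_pos (gauss_pos y) (by linarith [gaussIic_pos y]))
  obtain ⟨u, -, hu⟩ := intermediate_value_Icc (by linarith [inv_pos.2 hy] : -y⁻¹ ≤ y)
    continuous_add_gauss_div_gaussIic.continuousOn ⟨hlow.le, hhigh.le⟩
  exact ⟨u, hu, fun v hv => strictMono_add_gauss_div_gaussIic.injective (hv.trans hu.symm)⟩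

theorem stmt3 (x : ℝ) (hx : 0 < x) :
    ∃! θ : ℝ,
      θ + (1 / Real.sqrt Real.pi) * (Real.exp (-(2 * x + θ) ^ 2) / (1 + erf (2 * x + θ))) = 0 := by
  have hlhs (θ : ℝ) : θ + 1 / √π * (exp (-(2 * x + θ) ^ 2) / (1 + erf (2 * x + θ))) =
      (2 * x + θ) + gauss (2 * x + θ) / (2 * gaussIic (2 * x + θ)) - 2 * x := by
    have := gaussIic_pos (2 * x + θ)
    have : (0 : ℝ) < √π := sqrt_pos.2 pi_pos
    rw [one_add_erf, gauss]
    field_simp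
    ring
  simp only [hlhs, sub_eq_zero]
  obtain ⟨u, hu, huniq⟩ := existsUnique_add_gauss_div_gaussIic_eq (by positivity : 0 < 2 * x)
  refine ⟨u - 2 * x, by simpa using hu, fun θ hθ => ?_⟩
  linarith [huniq _ hθ]
end
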